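/- Let h : [0,∞) → ℝ be bounded and measurable, and let f_h be the standard solution of the half-normal Stein equation f'(x) - x f(x) = h(x) - E[h(|Z|)]. Then sup_{x≥0} |f_h(x)| ≤ ‖h - E[h(|Z|)]‖_∞ / (4 φ(z_{0.75})), where z_{0.75} = Φ^{-1}(3/4) and φ, Φ are the standard normal density and distribution function. -/

import Mathlib

/-!
Write `g = h - E[h(|Z|)]`, so `|g| ≤ c` on `[0, ∞)` and `∫₀^∞ g φ = 0` by symmetry of `φ`.
Hence `∫₀^x g φ = -∫ₓ^∞ g φ`, and `φ(x) |f_h(x)|` is at most `c` times both `Φ(x) - 1/2` and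
`1 - Φ(x)`. For `x ≤ z = z_{0.75}` the first is at most `1/4` and `φ(z) ≤ φ(x)`. For `x ≥ z`,
shifting the tail integral by `x - z` and using `φ(z) φ(t + x - z) ≤ φ(x) φ(t)` for `t ≥ z`
shows that the Mills ratio `(1 - Φ(x)) / φ(x)` is at most `(1 - Φ(z)) / φ(z) = 1 / (4 φ(z))`.
-/

open MeasureTheory ProbabilityTheory Real

/-- Standard normal density. -/
noncomputable def stdPhi (x : ℝ) : ℝ := Real.exp (-x^2/2) / Real.sqrt (2*Real.pi)

/-- Standard normal distribution function. -/
noncomputable def stdCDF (x : ℝ) : ℝ := ∫ t in Set.Iic x, stdPhi t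

/-- `E[h(|Z|)]` for `Z` standard normal. -/
noncomputable def Ehn (h : ℝ → ℝ) : ℝ := ∫ z, h |z| ∂(gaussianReal 0 1)

/-- The standard solution of the half-normal Stein equation. -/
noncomputable def fh (h : ℝ → ℝ) (x : ℝ) : ℝ :=
  (stdPhi x)⁻¹ * ∫ t in (0:ℝ)..x, (h t - Ehn h) * stdPhi t

open Set

lemma stdPhi_eq_gaussianPDFReal : stdPhi = gaussianPDFReal 0 1 := by
  funext x
  simp only [stdPhi, gaussianPDFReal, NNReal.coe_one, mul_one, sub_zero]
  ring

lemma stdPhi_pos (x : ℝ) : 0 < stdPhi x := by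
  rw [stdPhi_eq_gaussianPDFReal]
  exact gaussianPDFReal_pos 0 1 x one_ne_zero

lemma integrable_stdPhi : Integrable stdPhi := by
  rw [stdPhi_eq_gaussianPDFReal]
  exact integrable_gaussianPDFReal 0 1

lemma integral_stdPhi : ∫ x, stdPhi x = 1 := by
  rw [stdPhi_eq_gaussianPDFReal]
  exact integral_gaussianPDFReal_eq_one 0 one_ne_zero

lemma stdPhi_abs (x : ℝ) : stdPhi |x| = stdPhi x := by
  simp [stdPhi, sq_abs]

lemma stdPhi_le_stdPhi {a b : ℝ} (ha : 0 ≤ a) (hab : a ≤ b) : stdPhi b ≤ stdPhi a := by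
  unfold stdPhi
  gcongr

lemma setIntegral_Ioi_zero_mul_stdPhi (h : ℝ → ℝ) :
    ∫ t in Ioi 0, h t * stdPhi t = Ehn h / 2 := by
  have hsymm := integral_comp_abs (f := fun t => h t * stdPhi t)
  simp only [stdPhi_abs] at hsymm
  rw [Ehn, integral_gaussianReal_eq_integral_smul one_ne_zero, ← stdPhi_eq_gaussianPDFReal]
  simp only [smul_eq_mul, mul_comm (stdPhi _)]
  linarith

lemma setIntegral_Ioi_zero_stdPhi : ∫ t in Ioi 0, stdPhi t = 1 / 2 := by
  have := setIntegral_Ioi_zero_mul_stdPhi (fun _ => 1)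
  simp only [one_mul, Ehn, integral_const, probReal_univ, smul_eq_mul, mul_one] at this
  exact this

lemma setIntegral_Ioi_stdPhi (x : ℝ) : ∫ t in Ioi x, stdPhi t = 1 - stdCDF x := by
  rw [← integral_stdPhi, ← intervalIntegral.integral_Iic_add_Ioi integrable_stdPhi.integrableOn
    integrable_stdPhi.integrableOn, stdCDF]
  ring

lemma stdCDF_zero : stdCDF 0 = 1 / 2 := by
  linarith [setIntegral_Ioi_stdPhi 0, setIntegral_Ioi_zero_stdPhi]

lemma intervalIntegral_zero_stdPhi (x : ℝ) : ∫ t in 0..x, stdPhi t = stdCDF x - 1 / 2 := by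
  rw [← intervalIntegral.integral_Iic_sub_Iic integrable_stdPhi.integrableOn
    integrable_stdPhi.integrableOn, ← stdCDF_zero]
  rfl

lemma stdPhi_mul_stdPhi_add_le {z t d : ℝ} (hd : 0 ≤ d) (hzt : z ≤ t) :
    stdPhi z * stdPhi (t + d) ≤ stdPhi (z + d) * stdPhi t := by
  unfold stdPhi
  rw [div_mul_div_comm, div_mul_div_comm, ← exp_add, ← exp_add]
  refine div_le_div_of_nonneg_right (exp_le_exp.mpr ?_) (by positivity)
  nlinarith [mul_nonneg hd (sub_nonneg.mpr hzt)]

lemma stdPhi_mul_setIntegral_Ioi_le {z x : ℝ} (hzx : z ≤ x) :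
    stdPhi z * ∫ t in Ioi x, stdPhi t ≤ stdPhi x * ∫ t in Ioi z, stdPhi t := by
  have hshift : ∫ t in Ioi x, stdPhi t = ∫ t in Ioi z, stdPhi (t + (x - z)) := by
    rw [← (measurePreserving_add_right volume (x - z)).setIntegral_preimage_emb
      (measurableEmbedding_addRight (x - z)), preimage_add_const_Ioi, sub_sub_cancel]
  rw [hshift, ← integral_const_mul, ← integral_const_mul]
  refine setIntegral_mono_on ((integrable_stdPhi.comp_add_right _).const_mul _).integrableOn
    (integrable_stdPhi.const_mul _).integrableOn measurableSet_Ioi fun t ht => ?_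
  simpa using stdPhi_mul_stdPhi_add_le (sub_nonneg.mpr hzx) (le_of_lt ht)

lemma min_integral_stdPhi_le {x z : ℝ} (hx : 0 ≤ x) (hz : stdCDF z = 3 / 4) :
    min (∫ t in 0..x, stdPhi t) (∫ t in Ioi x, stdPhi t) ≤ stdPhi x / (4 * stdPhi z) := by
  have hpx := stdPhi_pos x
  have hpz := stdPhi_pos z
  have hz0 : 0 ≤ z := by
    by_contra! hneg
    have := intervalIntegral.integral_nonneg (μ := volume) hneg.le fun t _ => (stdPhi_pos t).le
    rw [intervalIntegral.integral_symm, intervalIntegral_zero_stdPhi, hz] at this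
    linarith
  rcases le_total x z with hxz | hzx
  · have hmass : ∫ t in 0..x, stdPhi t ≤ 1 / 4 := by
      calc ∫ t in 0..x, stdPhi t ≤ ∫ t in 0..z, stdPhi t :=
            intervalIntegral.integral_mono_interval le_rfl hx hxz
              (ae_of_all _ fun t => (stdPhi_pos t).le) integrable_stdPhi.intervalIntegrable
        _ = 1 / 4 := by rw [intervalIntegral_zero_stdPhi, hz]; norm_num
    refine (min_le_left _ _).trans (hmass.trans ?_)
    rw [le_div_iff₀ (by positivity)]
    linarith [stdPhi_le_stdPhi hx hxz]
  · refine (min_le_right _ _).trans ?_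
    rw [le_div_iff₀ (by positivity)]
    have := stdPhi_mul_setIntegral_Ioi_le hzx
    rw [setIntegral_Ioi_stdPhi z, hz] at this
    linarith

lemma integrableOn_mul_stdPhi {g : ℝ → ℝ} {s : Set ℝ} {c : ℝ} (hs : MeasurableSet s)
    (hg : Measurable g) (hbound : ∀ t ∈ s, |g t| ≤ c) :
    IntegrableOn (fun t => g t * stdPhi t) s :=
  integrable_stdPhi.integrableOn.bdd_mul hg.aestronglyMeasurable
    ((ae_restrict_iff' hs).mpr (ae_of_all _ hbound))

lemma abs_setIntegral_mul_stdPhi_le {g : ℝ → ℝ} {s : Set ℝ} {c : ℝ} (hs : MeasurableSet s)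
    (hbound : ∀ t ∈ s, |g t| ≤ c) :
    |∫ t in s, g t * stdPhi t| ≤ c * ∫ t in s, stdPhi t := by
  rw [← integral_const_mul, ← Real.norm_eq_abs]
  refine norm_integral_le_of_norm_le (integrable_stdPhi.const_mul c).integrableOn
    ((ae_restrict_iff' hs).mpr (ae_of_all _ fun t ht => ?_))
  rw [norm_mul, norm_of_nonneg (stdPhi_pos t).le]
  exact mul_le_mul_of_nonneg_right (hbound t ht) (stdPhi_pos t).le

section SteinEquation

variable {h : ℝ → ℝ} {c : ℝ}

lemma integrableOn_Ioi_stein_mul_stdPhi (hmeas : Measurable h)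
    (hc : ∀ t : ℝ, 0 ≤ t → |h t - Ehn h| ≤ c) :
    IntegrableOn (fun t => (h t - Ehn h) * stdPhi t) (Ioi 0) :=
  integrableOn_mul_stdPhi measurableSet_Ioi (hmeas.sub_const _) fun t ht => hc t (le_of_lt ht)

lemma setIntegral_Ioi_zero_stein_mul_stdPhi (hmeas : Measurable h)
    (hc : ∀ t : ℝ, 0 ≤ t → |h t - Ehn h| ≤ c) :
    ∫ t in Ioi 0, (h t - Ehn h) * stdPhi t = 0 := by
  have hint : IntegrableOn (fun t => h t * stdPhi t) (Ioi 0) :=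
    integrableOn_mul_stdPhi (c := |Ehn h| + c) measurableSet_Ioi hmeas fun t ht =>
      by linarith [abs_sub_abs_le_abs_sub (h t) (Ehn h), hc t (le_of_lt ht)]
  simp only [sub_mul]
  rw [integral_sub hint (integrable_stdPhi.const_mul _).integrableOn, integral_const_mul,
    setIntegral_Ioi_zero_mul_stdPhi, setIntegral_Ioi_zero_stdPhi]
  ring

lemma intervalIntegral_stein_mul_stdPhi_eq_neg_tail (hmeas : Measurable h)
    (hc : ∀ t : ℝ, 0 ≤ t → |h t - Ehn h| ≤ c) {x : ℝ} (hx : 0 ≤ x) :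
    ∫ t in 0..x, (h t - Ehn h) * stdPhi t = -∫ t in Ioi x, (h t - Ehn h) * stdPhi t := by
  rw [← intervalIntegral.integral_Ioi_sub_Ioi (integrableOn_Ioi_stein_mul_stdPhi hmeas hc) hx,
    setIntegral_Ioi_zero_stein_mul_stdPhi hmeas hc, zero_sub]

lemma abs_intervalIntegral_stein_mul_stdPhi_le (hmeas : Measurable h)
    (hc : ∀ t : ℝ, 0 ≤ t → |h t - Ehn h| ≤ c) {x : ℝ} (hx : 0 ≤ x) :
    |∫ t in 0..x, (h t - Ehn h) * stdPhi t|
      ≤ c * min (∫ t in 0..x, stdPhi t) (∫ t in Ioi x, stdPhi t) := by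
  rw [mul_min_of_nonneg _ _ ((abs_nonneg _).trans (hc 0 le_rfl))]
  refine le_min ?_ ?_
  · simp only [intervalIntegral.integral_of_le hx]
    exact abs_setIntegral_mul_stdPhi_le measurableSet_Ioc fun t ht => hc t ht.1.le
  · rw [intervalIntegral_stein_mul_stdPhi_eq_neg_tail hmeas hc hx, abs_neg]
    exact abs_setIntegral_mul_stdPhi_le measurableSet_Ioi fun t ht => hc t (hx.trans ht.le)

end SteinEquation

theorem stmt6 (h : ℝ → ℝ) (hmeas : Measurable h)
    (c : ℝ) (hc : ∀ t : ℝ, 0 ≤ t → |h t - Ehn h| ≤ c)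
    (z : ℝ) (hz : stdCDF z = 3/4) :
    ∀ x : ℝ, 0 ≤ x → |fh h x| ≤ c / (4 * stdPhi z) := by
  intro x hx
  have hc0 : 0 ≤ c := (abs_nonneg _).trans (hc 0 le_rfl)
  have hpx := stdPhi_pos x
  calc |fh h x| = |∫ t in 0..x, (h t - Ehn h) * stdPhi t| / stdPhi x := by
        rw [fh, abs_mul, abs_inv, abs_of_pos hpx, inv_mul_eq_div]
    _ ≤ c * min (∫ t in 0..x, stdPhi t) (∫ t in Ioi x, stdPhi t) / stdPhi x := by
        gcongr
        exact abs_intervalIntegral_stein_mul_stdPhi_le hmeas hc hx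
    _ ≤ c * (stdPhi x / (4 * stdPhi z)) / stdPhi x := by
        gcongr
        exact min_integral_stdPhi_le hx hz
    _ = c / (4 * stdPhi z) := by field_simp
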